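/- (Proposition 2, strong duality.) Let q ∈ Δ, let A be an n × m real matrix, b ∈ ℝᵐ, and set Ω = {p ∈ ℝⁿ : Aᵀp = b}. Suppose p̂ ∈ Ω ∩ Δ minimizes p ↦ D_f(p, q) over Ω ∩ cl(Δ), and suppose λ̂ ∈ ℝᵐ satisfies ∇f(p̂) = ∇f(q) − Aλ̂. Then for every λ ∈ ℝᵐ for which there exists p_λ ∈ Δ with ∇f(p_λ) = ∇f(q) − Aλ, one has L(p_λ, q, λ) ≤ L(p̂, q, λ̂) = D_f(p̂, q), where L(p, q, λ) = D_f(p, q) + ⟨Aᵀp − b, λ⟩. In other words, λ̂ maximizes the dual objective and the optimal dual value equals the optimal primal value. -/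

import Mathlib

open scoped RealInnerProductSpace Matrix

/-! For fixed `λ`, the Lagrangian `p ↦ L(p, q, λ)` is `f` plus an affine function, hence convex,
and the condition `∇f(p_λ) = ∇f(q) − Aλ` says exactly that its gradient vanishes at `p_λ`; so
`p_λ` minimizes it over `Δ` and `L(p_λ, q, λ) ≤ L(p̂, q, λ)`. Since `p̂` is feasible, the constraint
term vanishes at `p̂` for every multiplier, so `L(p̂, q, λ) = D_f(p̂, q) = L(p̂, q, λ̂)`. -/

theorem ConvexOn.add_le_of_hasFDerivAt {E : Type*} [NormedAddCommGroup E] [NormedSpace ℝ E]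
    {s : Set E} {f : E → ℝ} (hf : ConvexOn ℝ s f) {x y : E} (hx : x ∈ s) (hy : y ∈ s)
    {f' : E →L[ℝ] ℝ} (hf' : HasFDerivAt f f' x) :
    f x + f' (y - x) ≤ f y := by
  set γ : ℝ →ᵃ[ℝ] E := AffineMap.lineMap x y
  have hline : ConvexOn ℝ (Set.Icc 0 1) (f ∘ γ) :=
    (hf.comp_affineMap _).subset (fun t ht ↦ hf.1.lineMap_mem hx hy ht) (convex_Icc 0 1)
  have hderiv : HasDerivAt (f ∘ γ) (f' (y - x)) 0 := by
    rw [← AffineMap.lineMap_apply_zero (k := ℝ) x y] at hf'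
    exact hf'.comp_hasDerivAt 0 AffineMap.hasDerivAt_lineMap
  have := hline.le_slope_of_hasDerivAt (Set.left_mem_Icc.2 zero_le_one)
    (Set.right_mem_Icc.2 zero_le_one) zero_lt_one hderiv
  simp only [slope_def_field, Function.comp_apply, AffineMap.lineMap_apply_one,
    AffineMap.lineMap_apply_zero, sub_zero, div_one, γ] at this
  linarith

section Bregman

variable {E : Type*} [NormedAddCommGroup E] [InnerProductSpace ℝ E] [CompleteSpace E]

noncomputable def bregmanDiv (f : E → ℝ) (p q : E) : ℝ :=
  f p - f q - ⟪gradient f q, p - q⟫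

theorem bregmanDiv_add_inner_le_of_hasGradientAt {s : Set E} {f : E → ℝ} (hf : ConvexOn ℝ s f)
    {p₀ p q w : E} (hp₀ : p₀ ∈ s) (hp : p ∈ s) (hf' : HasGradientAt f (gradient f q - w) p₀) :
    bregmanDiv f p₀ q + ⟪w, p₀⟫ ≤ bregmanDiv f p q + ⟪w, p⟫ := by
  have hfirst := hf.add_le_of_hasFDerivAt hp₀ hp (hasGradientAt_iff_hasFDerivAt.1 hf')
  simp only [InnerProductSpace.toDual_apply_apply, inner_sub_left, inner_sub_right] at hfirst
  simp only [bregmanDiv, inner_sub_right]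
  linarith

end Bregman

theorem sum_constraint_mul_eq_inner_mulVec_sub {n m : ℕ} (A : Matrix (Fin n) (Fin m) ℝ)
    (b l : Fin m → ℝ) (p : EuclideanSpace ℝ (Fin n)) :
    ∑ j, (∑ i, A i j * p i - b j) * l j = ⟪WithLp.toLp 2 (A *ᵥ l), p⟫ - b ⬝ᵥ l := by
  rw [EuclideanSpace.inner_eq_star_dotProduct, star_trivial, Matrix.dotProduct_mulVec]
  simp only [dotProduct, Matrix.vecMul, sub_mul, Finset.sum_sub_distrib]
  simp [mul_comm]

theorem bregman_strong_duality_general {n m : ℕ} {Δ : Set (EuclideanSpace ℝ (Fin n))}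
    (hopen : IsOpen Δ)
    {f : EuclideanSpace ℝ (Fin n) → ℝ}
    (hdiff : DifferentiableOn ℝ f Δ)
    (hsc : StrictConvexOn ℝ (closure Δ) f)
    {D : EuclideanSpace ℝ (Fin n) → EuclideanSpace ℝ (Fin n) → ℝ}
    (hD : ∀ p q, D p q = f p - f q - ⟪gradient f q, p - q⟫)
    {q : EuclideanSpace ℝ (Fin n)}
    (A : Matrix (Fin n) (Fin m) ℝ) (b : Fin m → ℝ)
    (L : EuclideanSpace ℝ (Fin n) → (Fin m → ℝ) → ℝ)
    (hLdef : ∀ p l, L p l = D p q + ∑ j, (∑ i, A i j * p i - b j) * l j)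
    {phat : EuclideanSpace ℝ (Fin n)}
    (hphatΩ : ∀ j, ∑ i, A i j * phat i = b j) (hphatΔ : phat ∈ Δ)
    {lamhat : Fin m → ℝ} :
    L phat lamhat = D phat q ∧
      ∀ (lam : Fin m → ℝ) (plam : EuclideanSpace ℝ (Fin n)), plam ∈ Δ →
        (∀ i, gradient f plam i = gradient f q i - ∑ j, A i j * lam j) →
        L plam lam ≤ L phat lamhat := by
  have hL : ∀ p l, L p l = bregmanDiv f p q + ⟪WithLp.toLp 2 (A *ᵥ l), p⟫ - b ⬝ᵥ l := by
    intro p l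
    rw [hLdef, hD, sum_constraint_mul_eq_inner_mulVec_sub, bregmanDiv]
    ring
  have hLphat : ∀ l, L phat l = D phat q := by
    simp [hLdef, hphatΩ]
  refine ⟨hLphat lamhat, fun lam plam hplam hgrad ↦ ?_⟩
  have hstat : HasGradientAt f (gradient f q - WithLp.toLp 2 (A *ᵥ lam)) plam := by
    convert ((hdiff plam hplam).differentiableAt (hopen.mem_nhds hplam)).hasGradientAt
    ext i
    simp [hgrad i, Matrix.mulVec, dotProduct]
  have hplam_min := bregmanDiv_add_inner_le_of_hasGradientAt hsc.convexOn (subset_closure hplam)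
    (subset_closure hphatΔ) hstat
  rw [hLphat, ← hLphat lam, hL, hL]
  linarith

/-- (Proposition 2, strong duality.) For `q ∈ Δ`, `Ω = {p : Aᵀp = b}`, and the
Lagrangian `L(p, q, λ) = D_f(p, q) + ⟪Aᵀp − b, λ⟫`: if `phat ∈ Ω ∩ Δ` minimizes `D_f(·, q)`
over `Ω ∩ cl(Δ)` and `λ̂` satisfies `∇f(phat) = ∇f(q) − Aλ̂`, then for every `λ` admitting
`p_λ ∈ Δ` with `∇f(p_λ) = ∇f(q) − Aλ`, one has `L(p_λ, q, λ) ≤ L(phat, q, λ̂) = D_f(phat, q)`. -/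
theorem bregman_strong_duality {n m : ℕ} {Δ : Set (EuclideanSpace ℝ (Fin n))}
    (hne : Δ.Nonempty) (hopen : IsOpen Δ) (hconv : Convex ℝ Δ)
    {f : EuclideanSpace ℝ (Fin n) → ℝ}
    (hcont : ContinuousOn f (closure Δ))
    (hdiff : DifferentiableOn ℝ f Δ)
    (hsc : StrictConvexOn ℝ (closure Δ) f)
    {D : EuclideanSpace ℝ (Fin n) → EuclideanSpace ℝ (Fin n) → ℝ}
    (hD : ∀ p q, D p q = f p - f q - ⟪gradient f q, p - q⟫)
    {q : EuclideanSpace ℝ (Fin n)} (hq : q ∈ Δ)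
    (A : Matrix (Fin n) (Fin m) ℝ) (b : Fin m → ℝ)
    (L : EuclideanSpace ℝ (Fin n) → (Fin m → ℝ) → ℝ)
    (hLdef : ∀ p l, L p l = D p q + ∑ j, (∑ i, A i j * p i - b j) * l j)
    {phat : EuclideanSpace ℝ (Fin n)}
    (hphatΩ : ∀ j, ∑ i, A i j * phat i = b j) (hphatΔ : phat ∈ Δ)
    (hmin : ∀ p : EuclideanSpace ℝ (Fin n),
      (∀ j, ∑ i, A i j * p i = b j) → p ∈ closure Δ → D phat q ≤ D p q)
    {lamhat : Fin m → ℝ}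
    (hgradhat : ∀ i, gradient f phat i = gradient f q i - ∑ j, A i j * lamhat j) :
    L phat lamhat = D phat q ∧
      ∀ (lam : Fin m → ℝ) (plam : EuclideanSpace ℝ (Fin n)), plam ∈ Δ →
        (∀ i, gradient f plam i = gradient f q i - ∑ j, A i j * lam j) →
        L plam lam ≤ L phat lamhat :=
  bregman_strong_duality_general hopen hdiff hsc hD A b L hLdef hphatΩ hphatΔ
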